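/- arXiv:1910.02469 — 6 statements merged into one kernel-verified Lean document; each statement's English description precedes it below -/
import Mathlib

section
/- Let F be an n×n Metzler matrix (all off-diagonal entries nonnegative). If there exists a vector d with all entries strictly positive such that all entries of F·d are strictly negative, then F is Hurwitz, i.e., every eigenvalue of F has strictly negative real part. -/
/-!
Weighted Gershgorin: conjugating `F` by `D = diagonal d` does not change its spectrum, and the
Gershgorin discs of `D⁻¹ F D` have centres `F k k` and radii `∑_{j ≠ k} F k j d j / d k`.
Since `F` is Metzler, `F k k + ∑_{j ≠ k} F k j d j / d k = (F d)_k / d k < 0`, so every disc lies in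
the open left half-plane.
-/

open Matrix

/-- A real square matrix is Hurwitz if all its (complex) eigenvalues have
negative real part. -/
def IsHurwitz {n : ℕ} (A : Matrix (Fin n) (Fin n) ℝ) : Prop :=
  ∀ μ ∈ spectrum ℂ (A.map Complex.ofReal), μ.re < 0

open Finset

theorem exists_norm_sub_diag_mul_le_of_mem_spectrum {K n : Type*} [NormedField K] [Fintype n]
    [DecidableEq n] {A : Matrix n n K} {μ : K} (hμ : μ ∈ spectrum K A) {d : n → K}
    (hd : ∀ i, d i ≠ 0) :
    ∃ k, ‖μ - A k k‖ * ‖d k‖ ≤ ∑ j ∈ univ.erase k, ‖A k j‖ * ‖d j‖ := by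
  have hdU : IsUnit d := Pi.isUnit_iff.mpr fun i => (hd i).isUnit
  have hD : IsUnit (diagonal d) := isUnit_diagonal.mpr hdU
  set B := (diagonal d)⁻¹ * A * diagonal d with hB
  have hBμ : Module.End.HasEigenvalue (toLin' B) μ := by
    rw [Module.End.hasEigenvalue_iff_mem_spectrum, spectrum_toLin', hB,
      ← hD.unit_spec, ← Matrix.coe_units_inv, spectrum.units_conjugate']
    exact hμ
  have hBij : ∀ i j, B i j = (d i)⁻¹ * A i j * d j := by
    intro i j
    simp [hB, inv_diagonal, diagonal_mul, mul_diagonal, Ring.inverse, hdU]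
  obtain ⟨k, hk⟩ := eigenvalue_mem_ball hBμ
  refine ⟨k, ?_⟩
  have hBkk : B k k = A k k := by rw [hBij, mul_comm, mul_inv_cancel_left₀ (hd k)]
  rw [mem_closedBall_iff_norm, hBkk] at hk
  simp_rw [hBij, norm_mul, norm_inv, mul_assoc, ← mul_sum] at hk
  rwa [← le_div_iff₀ (norm_pos_iff.mpr (hd k)), div_eq_inv_mul]

theorem sum_erase_abs_mul_eq_mulVec_sub {n : Type*} [Fintype n] [DecidableEq n]
    {F : Matrix n n ℝ} {k : n} (hF : ∀ j, k ≠ j → 0 ≤ F k j) (d : n → ℝ) :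
    ∑ j ∈ univ.erase k, |F k j| * d j = (F *ᵥ d) k - F k k * d k := by
  rw [mulVec, dotProduct, ← add_sum_erase _ _ (mem_univ k), add_sub_cancel_left]
  exact sum_congr rfl fun j hj => by rw [abs_of_nonneg (hF j (ne_of_mem_erase hj).symm)]

theorem re_neg_of_mem_spectrum_of_metzler {n : Type*} [Fintype n] [DecidableEq n]
    {F : Matrix n n ℝ} (hF : ∀ i j, i ≠ j → 0 ≤ F i j) {d : n → ℝ} (hd : ∀ i, 0 < d i)
    (hFd : ∀ i, (F *ᵥ d) i < 0) {μ : ℂ} (hμ : μ ∈ spectrum ℂ (F.map Complex.ofReal)) :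
    μ.re < 0 := by
  obtain ⟨k, hk⟩ := exists_norm_sub_diag_mul_le_of_mem_spectrum hμ
    (d := fun i => (d i : ℂ)) fun i => Complex.ofReal_ne_zero.mpr (hd i).ne'
  simp only [map_apply, Complex.norm_real, Real.norm_eq_abs, abs_of_pos (hd _)] at hk
  rw [sum_erase_abs_mul_eq_mulVec_sub (hF k)] at hk
  have hre : μ.re - F k k ≤ ‖μ - F k k‖ := by simpa using Complex.re_le_norm (μ - F k k)
  have hneg : μ.re * d k < 0 :=
    calc μ.re * d k = (μ.re - F k k) * d k + F k k * d k := by ring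
      _ ≤ ‖μ - F k k‖ * d k + F k k * d k := by gcongr; exact (hd k).le
      _ ≤ (F *ᵥ d) k := by linarith
      _ < 0 := hFd k
  exact neg_of_mul_neg_left hneg (hd k).le

/-- a Metzler matrix admitting a positive vector `d` with
`F d < 0` entrywise is Hurwitz. -/
theorem metzler_pos_vector_implies_hurwitz {n : ℕ} (F : Matrix (Fin n) (Fin n) ℝ)
    (hMetzler : ∀ i j, i ≠ j → 0 ≤ F i j)
    (d : Fin n → ℝ) (hd : ∀ i, 0 < d i)
    (hFd : ∀ i, F.mulVec d i < 0) :
    IsHurwitz F :=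
  fun _ hμ => re_neg_of_mem_spectrum_of_metzler hMetzler hd hFd hμ
end

section
/- Let F be an n×n Metzler Hurwitz matrix. Then there exists a diagonal positive definite matrix P such that P F + Fᵀ P is negative definite. -/
/-!
For a Metzler matrix `F` without eigenvalues in `[0, ∞)`, the Metzler matrices
`N u = u • F - (1 - u) • 1`, `u ∈ [0, 1]`, are all invertible, so the solution of `N u y = -1`
moves continuously from `y = 1` at `u = 0`. It never reaches the boundary of the positive orthant,
since a nonnegative `y` with `N u y < 0` is positive when `N u` is Metzler. Hence some `v > 0` has
`F v < 0`, and likewise some `w > 0` has `Fᵀ w < 0`. For `P = diag (w / v)` the matrix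
`S = P F + Fᵀ P` is symmetric and Metzler with `S v = P (F v) + Fᵀ w < 0`, and such a matrix is
negative definite because `xᵀ S x ≤ ∑ᵢ xᵢ² (S v)ᵢ / vᵢ`.
-/

open Matrix

def Matrix.IsMetzler {ι : Type*} (F : Matrix ι ι ℝ) : Prop :=
  ∀ i j, i ≠ j → 0 ≤ F i j

theorem Matrix.IsMetzler.transpose {ι : Type*} {F : Matrix ι ι ℝ} (hF : F.IsMetzler) :
    Fᵀ.IsMetzler :=
  fun i j hij => hF j i hij.symm

theorem IsHurwitz.not_isRoot_charpoly {n : ℕ} {F : Matrix (Fin n) (Fin n) ℝ} (hF : IsHurwitz F)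
    {t : ℝ} (ht : 0 ≤ t) : ¬ F.charpoly.IsRoot t := by
  intro hroot
  have hmem : (t : ℂ) ∈ spectrum ℂ (F.map Complex.ofReal) := by
    refine mem_spectrum_of_isRoot_charpoly ?_
    change (F.map Complex.ofRealHom).charpoly.IsRoot (Complex.ofRealHom t)
    rw [charpoly_map, Polynomial.IsRoot, Polynomial.eval_map_apply, hroot.eq_zero, map_zero]
  have := hF _ hmem
  rw [Complex.ofReal_re] at this
  linarith

theorem IsPreconnected.forall_pos_of_nonneg_imp_pos {X ι : Type*} [TopologicalSpace X] [Finite ι]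
    {s : Set X} (hs : IsPreconnected s) {f : X → ι → ℝ} (hf : ContinuousOn f s)
    (hpos : ∀ x ∈ s, 0 ≤ f x → ∀ i, 0 < f x i) {x₀ : X} (hx₀ : x₀ ∈ s) (h₀ : ∀ i, 0 < f x₀ i) :
    ∀ x ∈ s, ∀ i, 0 < f x i := by
  set U : Set (ι → ℝ) := {y | ∀ i, 0 < y i}
  set V : Set (ι → ℝ) := {y | ∃ i, y i < 0}
  have hU : IsOpen U := by
    simp only [U, Set.ofPred_forall]
    exact isOpen_iInter_of_finite fun i => isOpen_lt continuous_const (continuous_apply i)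
  have hV : IsOpen V := by
    simp only [V, Set.ofPred_exists]
    exact isOpen_iUnion fun i => isOpen_lt (continuous_apply i) continuous_const
  have hUV : Disjoint U V :=
    Set.disjoint_left.2 fun y hyU ⟨i, hi⟩ => (hyU i).not_gt hi
  have hcover : f '' s ⊆ U ∪ V := by
    rintro _ ⟨x, hx, rfl⟩
    by_cases h : ∃ i, f x i < 0
    · exact Or.inr h
    · push Not at h
      exact Or.inl (hpos x hx h)
  have hsub := (hs.image f hf).subset_left_of_subset_union hU hV hUV hcover
    ⟨f x₀, Set.mem_image_of_mem f hx₀, h₀⟩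
  exact fun x hx => hsub (Set.mem_image_of_mem f hx)

namespace Matrix.IsMetzler

variable {ι : Type*} [Fintype ι]

theorem pos_of_nonneg_of_mulVec_neg {A : Matrix ι ι ℝ} (hA : A.IsMetzler) {x : ι → ℝ}
    (hx : 0 ≤ x) (hAx : ∀ i, (A *ᵥ x) i < 0) (i : ι) : 0 < x i := by
  refine (hx i).lt_of_ne' fun hxi => (hAx i).not_ge ?_
  refine Finset.sum_nonneg fun j _ => ?_
  by_cases hij : i = j
  · simp [← hij, hxi]
  · exact mul_nonneg (hA i j hij) (hx j)

theorem exists_pos_mulVec_neg [DecidableEq ι] {F : Matrix ι ι ℝ} (hF : F.IsMetzler)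
    (hroot : ∀ t : ℝ, 0 ≤ t → ¬ F.charpoly.IsRoot t) :
    ∃ v : ι → ℝ, (∀ i, 0 < v i) ∧ ∀ i, (F *ᵥ v) i < 0 := by
  set N : ℝ → Matrix ι ι ℝ := fun u => u • F - (1 - u) • 1
  have hN_metzler : ∀ u, 0 ≤ u → (N u).IsMetzler := fun u hu i j hij => by
    simpa [N, one_apply_ne hij] using mul_nonneg hu (hF i j hij)
  have hN_det : ∀ u ∈ Set.Icc (0 : ℝ) 1, (N u).det ≠ 0 := by
    rintro u ⟨hu0, hu1⟩
    rcases hu0.eq_or_lt with rfl | hu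
    · simp [N, det_neg]
    · have hN : N u = (-u) • (scalar ι ((1 - u) / u) - F) := by
        ext i j
        rcases eq_or_ne i j with rfl | hij
        · simp only [N, sub_apply, smul_apply, smul_eq_mul, one_apply_eq, mul_one, scalar_apply,
            diagonal_apply_eq, neg_mul]
          field_simp
          ring
        · simp [N, hij]
      rw [hN, det_smul, ← eval_charpoly]
      exact mul_ne_zero (pow_ne_zero _ (neg_ne_zero.2 hu.ne'))
        (hroot _ (div_nonneg (by linarith) hu.le))
  set y : ℝ → ι → ℝ := fun u => (N u)⁻¹ *ᵥ (-1)
  have hNy : ∀ u ∈ Set.Icc (0 : ℝ) 1, N u *ᵥ y u = -1 := fun u hu => by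
    rw [mulVec_mulVec, mul_nonsing_inv _ (hN_det u hu).isUnit, one_mulVec]
  have hy_cont : ContinuousOn y (Set.Icc 0 1) := by
    intro u hu
    have hinv : ContinuousAt Ring.inverse (N u).det := by
      rw [Ring.inverse_eq_inv']
      exact continuousAt_inv₀ (hN_det u hu)
    have hN_cont : Continuous N := by fun_prop
    have hmulVec_cont : Continuous fun M : Matrix ι ι ℝ => M *ᵥ (-1) :=
      continuous_id.matrix_mulVec continuous_const
    exact (hmulVec_cont.continuousAt.comp
      ((continuousAt_matrix_inv _ hinv).comp hN_cont.continuousAt)).continuousWithinAt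
  have hy_pos := isPreconnected_Icc.forall_pos_of_nonneg_imp_pos hy_cont
    (fun u hu hy => (hN_metzler u hu.1).pos_of_nonneg_of_mulVec_neg hy (by simp [hNy u hu]))
    (Set.left_mem_Icc.2 zero_le_one) (by
      have h0 : y 0 = 1 := by simpa [N, neg_mulVec] using hNy 0 (Set.left_mem_Icc.2 zero_le_one)
      simp [h0])
  refine ⟨y 1, hy_pos 1 (Set.right_mem_Icc.2 zero_le_one), fun i => ?_⟩
  have h1 : F *ᵥ y 1 = -1 := by simpa [N] using hNy 1 (Set.right_mem_Icc.2 zero_le_one)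
  simp [h1]

theorem dotProduct_mulVec_le {S : Matrix ι ι ℝ} (hM : S.IsMetzler) (hS : S.IsSymm)
    {v : ι → ℝ} (hv : ∀ i, 0 < v i) (x : ι → ℝ) :
    x ⬝ᵥ (S *ᵥ x) ≤ ∑ i, x i ^ 2 / v i * (S *ᵥ v) i := by
  -- twice the gap is `∑ i j, S i j * v i * v j * (x i / v i - x j / v j) ^ 2`
  set g : ι → ι → ℝ := fun i j => x i ^ 2 / v i * v j - x i * x j
  have hdiff : ∑ i, x i ^ 2 / v i * (S *ᵥ v) i - x ⬝ᵥ (S *ᵥ x) = ∑ i, ∑ j, S i j * g i j := by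
    simp only [dotProduct, mulVec, Finset.mul_sum, ← Finset.sum_sub_distrib, g]
    exact Finset.sum_congr rfl fun i _ => Finset.sum_congr rfl fun j _ => by ring
  have hswap : ∑ i, ∑ j, S i j * g i j = ∑ i, ∑ j, S i j * g j i := by
    rw [Finset.sum_comm]
    simp only [hS.apply]
  have hterm : ∀ i j, 0 ≤ S i j * (g i j + g j i) := by
    intro i j
    have hvi := (hv i).ne'
    have hvj := (hv j).ne'
    rcases eq_or_ne i j with rfl | hij
    · have hgii : g i i = 0 := by
        simp only [g]
        field_simp
        ring
      simp [hgii]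
    · have hsq : g i j + g j i = (x i * v j - x j * v i) ^ 2 / (v i * v j) := by
        simp only [g]
        field_simp
        ring
      rw [hsq]
      exact mul_nonneg (hM i j hij) (div_nonneg (sq_nonneg _) (mul_pos (hv i) (hv j)).le)
  have hsum : 0 ≤ 2 * ∑ i, ∑ j, S i j * g i j := by
    calc (0 : ℝ) ≤ ∑ i, ∑ j, S i j * (g i j + g j i) :=
          Finset.sum_nonneg fun i _ => Finset.sum_nonneg fun j _ => hterm i j
      _ = 2 * ∑ i, ∑ j, S i j * g i j := by
          rw [two_mul]
          nth_rw 2 [hswap]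
          simp only [mul_add, Finset.sum_add_distrib]
  linarith

theorem posDef_neg {S : Matrix ι ι ℝ} (hM : S.IsMetzler) (hS : S.IsSymm)
    {v : ι → ℝ} (hv : ∀ i, 0 < v i) (hSv : ∀ i, (S *ᵥ v) i < 0) : (-S).PosDef := by
  rw [posDef_iff_dotProduct_mulVec]
  refine ⟨isHermitian_iff_isSymm.2 hS.neg, fun x hx => ?_⟩
  obtain ⟨k, hk⟩ := Function.ne_iff.1 hx
  have hneg : 0 < ∑ i, -(x i ^ 2 / v i * (S *ᵥ v) i) :=
    Finset.sum_pos' (fun i _ => neg_nonneg.2 (mul_nonpos_of_nonneg_of_nonpos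
        (div_nonneg (sq_nonneg _) (hv i).le) (hSv i).le))
      ⟨k, Finset.mem_univ k, neg_pos.2 (mul_neg_of_pos_of_neg
        (div_pos (sq_pos_of_ne_zero hk) (hv k)) (hSv k))⟩
  rw [neg_mulVec, dotProduct_neg, star_trivial, Finset.sum_neg_distrib] at *
  linarith [dotProduct_mulVec_le hM hS hv x]

theorem posDef_neg_diagonal_mul_add_transpose_mul [DecidableEq ι] {F : Matrix ι ι ℝ}
    (hF : F.IsMetzler) {v w : ι → ℝ} (hv : ∀ i, 0 < v i) (hw : ∀ i, 0 < w i)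
    (hFv : ∀ i, (F *ᵥ v) i < 0) (hFw : ∀ i, (Fᵀ *ᵥ w) i < 0) :
    (-(diagonal (fun i => w i / v i) * F + Fᵀ * diagonal (fun i => w i / v i))).PosDef := by
  set p : ι → ℝ := fun i => w i / v i
  have hp : ∀ i, 0 < p i := fun i => div_pos (hw i) (hv i)
  refine posDef_neg (fun i j hij => ?_) ?_ hv fun i => ?_
  · simp only [add_apply, diagonal_mul, mul_diagonal, transpose_apply]
    exact add_nonneg (mul_nonneg (hp i).le (hF i j hij)) (mul_nonneg (hF j i hij.symm) (hp j).le)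
  · simp only [IsSymm, transpose_add, transpose_mul, diagonal_transpose, transpose_transpose,
      add_comm]
  · have hpv : diagonal p *ᵥ v = w := funext fun i => by
      simp [mulVec_diagonal, p, div_mul_cancel₀ _ (hv i).ne']
    rw [add_mulVec, ← mulVec_mulVec, ← mulVec_mulVec, hpv, Pi.add_apply, mulVec_diagonal]
    exact add_neg_of_nonpos_of_neg (mul_nonpos_of_nonneg_of_nonpos (hp i).le (hFv i).le) (hFw i)

end Matrix.IsMetzler

/-- a Metzler Hurwitz matrix admits a diagonal positive definite
solution `P` to the Lyapunov inequality `P F + Fᵀ P ≺ 0`. -/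
theorem metzler_hurwitz_diagonal_lyapunov {n : ℕ} (F : Matrix (Fin n) (Fin n) ℝ)
    (hMetzler : ∀ i j, i ≠ j → 0 ≤ F i j)
    (hHurwitz : IsHurwitz F) :
    ∃ p : Fin n → ℝ, (∀ i, 0 < p i) ∧
      (-(Matrix.diagonal p * F + Fᵀ * Matrix.diagonal p)).PosDef := by
  have hF : F.IsMetzler := hMetzler
  obtain ⟨v, hv, hFv⟩ := hF.exists_pos_mulVec_neg fun _ ht => hHurwitz.not_isRoot_charpoly ht
  obtain ⟨w, hw, hFw⟩ := hF.transpose.exists_pos_mulVec_neg fun _ ht => by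
    rw [charpoly_transpose]
    exact hHurwitz.not_isRoot_charpoly ht
  exact ⟨_, fun i => div_pos (hw i) (hv i),
    hF.posDef_neg_diagonal_mul_add_transpose_mul hv hw hFv hFw⟩
end

section
/- Let A be a real n×n Hurwitz matrix, P a symmetric positive definite n×n matrix, B an n×m real matrix, and γ > 0 a scalar such that P A + Aᵀ P + γ I + (1/γ) P B Bᵀ P ⪯ 0. Then for every ω ∈ ℝ, the largest singular value of (iωI − A)⁻¹ B is at most 1, i.e., sup over ω ∈ ℝ of ‖(iωI − A)⁻¹B‖₂ ≤ 1. -/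
open Matrix

noncomputable def opNorm {m n : Type*} [Fintype m] [Fintype n] [DecidableEq n]
    (M : Matrix m n ℂ) : ℝ :=
  ‖LinearMap.toContinuousLinearMap (Matrix.toEuclideanLin M)‖

/-!
If `(iω - A) x = B u`, then `A x = iω x - B u`, and the Lyapunov term `x* (P A + Aᴴ P) x`
collapses to `-2 Re ⟪w, u⟫` with `w = Bᴴ P x`, because `iω` is purely imaginary and `P` is
Hermitian. Completing the square in `w` turns the Riccati inequality into the identity
`γ (‖u‖² - ‖x‖²) = x* Q x + γ⁻¹ ‖w - γ u‖²` with `Q ⪰ 0`, so `‖x‖ ≤ ‖u‖`.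
-/

open scoped ComplexOrder

section Riccati

variable {𝕜 n m : Type*} [RCLike 𝕜] [Fintype n] [Fintype m]

theorem Matrix.IsHermitian.dotProduct_mul_conjTranspose_mul_mulVec {P : Matrix n n 𝕜}
    (hP : P.IsHermitian) (B : Matrix n m 𝕜) (x : n → 𝕜) :
    star x ⬝ᵥ (P * B * Bᴴ * P) *ᵥ x = star (Bᴴ *ᵥ P *ᵥ x) ⬝ᵥ (Bᴴ *ᵥ P *ᵥ x) := by
  rw [star_mulVec, star_mulVec, hP.eq, conjTranspose_conjTranspose, ← mulVec_mulVec,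
    ← mulVec_mulVec, ← mulVec_mulVec, dotProduct_mulVec, dotProduct_mulVec, vecMul_vecMul]

theorem Matrix.IsHermitian.dotProduct_lyapunov_mulVec_of_mulVec_eq {A P : Matrix n n 𝕜}
    {B : Matrix n m 𝕜} (hP : P.IsHermitian) {s : 𝕜} (hs : star s = -s) {x : n → 𝕜}
    {u : m → 𝕜} (hx : A *ᵥ x = s • x - B *ᵥ u) :
    star x ⬝ᵥ (P * A + Aᴴ * P) *ᵥ x =
      -(star (Bᴴ *ᵥ P *ᵥ x) ⬝ᵥ u + star u ⬝ᵥ (Bᴴ *ᵥ P *ᵥ x)) := by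
  have hPA : star x ⬝ᵥ (P * A) *ᵥ x =
      s * (star x ⬝ᵥ P *ᵥ x) - star (Bᴴ *ᵥ P *ᵥ x) ⬝ᵥ u := by
    rw [← mulVec_mulVec, hx, mulVec_sub, mulVec_smul, dotProduct_sub, dotProduct_smul,
      smul_eq_mul]
    simp only [star_mulVec, hP.eq, conjTranspose_conjTranspose, dotProduct_mulVec,
      vecMul_vecMul]
  have hAP : star x ⬝ᵥ (Aᴴ * P) *ᵥ x =
      star s * (star x ⬝ᵥ P *ᵥ x) - star u ⬝ᵥ (Bᴴ *ᵥ P *ᵥ x) := by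
    rw [← mulVec_mulVec, dotProduct_mulVec, ← star_mulVec, hx, star_sub, star_smul,
      sub_dotProduct, smul_dotProduct, smul_eq_mul, star_mulVec, ← dotProduct_mulVec]
  rw [add_mulVec, dotProduct_add, hPA, hAP, hs]
  ring

theorem dotProduct_star_self_le_of_riccati [DecidableEq n] {A P : Matrix n n 𝕜}
    {B : Matrix n m 𝕜} {γ : ℝ} (hP : P.IsHermitian) (hγ : 0 < γ)
    (hRic : (-(P * A + Aᴴ * P + γ • (1 : Matrix n n 𝕜) + γ⁻¹ • (P * B * Bᴴ * P))).PosSemidef)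
    {s : 𝕜} (hs : star s = -s) {x : n → 𝕜} {u : m → 𝕜} (hx : A *ᵥ x = s • x - B *ᵥ u) :
    star x ⬝ᵥ x ≤ star u ⬝ᵥ u := by
  set w := Bᴴ *ᵥ P *ᵥ x
  set v := w - (γ : 𝕜) • u
  have hγ' : (γ : 𝕜) ≠ 0 := by exact_mod_cast hγ.ne'
  have key : (γ : 𝕜) * (star u ⬝ᵥ u - star x ⬝ᵥ x) =
      star x ⬝ᵥ (-(P * A + Aᴴ * P + γ • (1 : Matrix n n 𝕜) + γ⁻¹ • (P * B * Bᴴ * P))) *ᵥ x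
        + (γ : 𝕜)⁻¹ * (star v ⬝ᵥ v) := by
    rw [neg_mulVec, add_mulVec, add_mulVec, dotProduct_neg, dotProduct_add, dotProduct_add,
      hP.dotProduct_lyapunov_mulVec_of_mulVec_eq hs hx, smul_mulVec, smul_mulVec, one_mulVec,
      dotProduct_smul, dotProduct_smul, hP.dotProduct_mul_conjTranspose_mul_mulVec,
      RCLike.real_smul_eq_coe_mul, RCLike.real_smul_eq_coe_mul, RCLike.ofReal_inv]
    simp only [v, star_sub, star_smul, sub_dotProduct, dotProduct_sub, smul_dotProduct,
      dotProduct_smul, smul_eq_mul, RCLike.star_def, RCLike.conj_ofReal]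
    field_simp
    ring
  have hγinv : 0 ≤ (γ : 𝕜)⁻¹ := by simpa using hγ.le
  have hscaled : 0 ≤ (γ : 𝕜) * (star u ⬝ᵥ u - star x ⬝ᵥ x) := by
    rw [key]
    exact add_nonneg (hRic.dotProduct_mulVec_nonneg x)
      (mul_nonneg hγinv (dotProduct_star_self_nonneg v))
  have := mul_nonneg hγinv hscaled
  rwa [inv_mul_cancel_left₀ hγ', sub_nonneg] at this

theorem norm_toLp_le_of_dotProduct_star_self_le {v : n → 𝕜} {w : m → 𝕜}
    (h : star v ⬝ᵥ v ≤ star w ⬝ᵥ w) : ‖WithLp.toLp 2 v‖ ≤ ‖WithLp.toLp 2 w‖ := by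
  rw [← pow_le_pow_iff_left₀ (norm_nonneg _) (norm_nonneg _) two_ne_zero,
    @norm_sq_eq_re_inner 𝕜, @norm_sq_eq_re_inner 𝕜, EuclideanSpace.inner_eq_star_dotProduct,
    EuclideanSpace.inner_eq_star_dotProduct, WithLp.ofLp_toLp, WithLp.ofLp_toLp,
    dotProduct_comm v, dotProduct_comm w]
  exact (RCLike.le_iff_re_im.mp h).1

end Riccati

theorem Matrix.mulVec_inv_smul_one_sub_mul_mulVec {R n m : Type*} [CommRing R] [Fintype n]
    [Fintype m] [DecidableEq n] {A : Matrix n n R} {s : R} (h : IsUnit (s • 1 - A))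
    (B : Matrix n m R) (u : m → R) :
    A *ᵥ ((s • 1 - A)⁻¹ * B) *ᵥ u = s • ((s • 1 - A)⁻¹ * B) *ᵥ u - B *ᵥ u := by
  have hres : (s • 1 - A) *ᵥ ((s • 1 - A)⁻¹ * B) *ᵥ u = B *ᵥ u := by
    rw [mulVec_mulVec, ← Matrix.mul_assoc, mul_nonsing_inv _ ((isUnit_iff_isUnit_det _).mp h),
      Matrix.one_mul]
  rw [sub_mulVec, smul_mulVec, one_mulVec] at hres
  rw [← hres, sub_sub_cancel]

theorem Matrix.PosSemidef.map_ofReal {n : Type*} [Fintype n] {Q : Matrix n n ℝ}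
    (hQ : Q.PosSemidef) : (Q.map ((↑) : ℝ → ℂ)).PosSemidef := by
  obtain ⟨k, v, rfl⟩ := posSemidef_iff_eq_sum_vecMulVec.mp hQ
  refine posSemidef_iff_eq_sum_vecMulVec.mpr ⟨k, fun i j ↦ v i j, ?_⟩
  ext a b
  simp [vecMulVec_apply, Matrix.sum_apply]

theorem IsHurwitz.isUnit_smul_one_sub_map {n : ℕ} {A : Matrix (Fin n) (Fin n) ℝ}
    (hA : IsHurwitz A) {μ : ℂ} (hμ : 0 ≤ μ.re) : IsUnit (μ • 1 - A.map Complex.ofReal) := by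
  rw [← Algebra.algebraMap_eq_smul_one, ← spectrum.notMem_iff]
  exact fun hmem ↦ (hμ.trans_lt (hA μ hmem)).false

theorem opNorm_le_one_of_dotProduct_star_self_le {n m : Type*} [Fintype n] [Fintype m]
    [DecidableEq n] {M : Matrix m n ℂ}
    (h : ∀ u, star (M *ᵥ u) ⬝ᵥ (M *ᵥ u) ≤ star u ⬝ᵥ u) : opNorm M ≤ 1 := by
  refine ContinuousLinearMap.opNorm_le_bound _ zero_le_one fun u ↦ ?_
  rw [one_mul]
  exact norm_toLp_le_of_dotProduct_star_self_le (h u.ofLp)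

theorem hinf_bound_of_riccati_general {n m : ℕ} (A : Matrix (Fin n) (Fin n) ℝ)
    (P : Matrix (Fin n) (Fin n) ℝ) (B : Matrix (Fin n) (Fin m) ℝ) (γ : ℝ)
    (hHurwitz : IsHurwitz A) (hPsym : P.IsSymm) (hγ : 0 < γ)
    (hRic : (-(P * A + Aᵀ * P + γ • (1 : Matrix (Fin n) (Fin n) ℝ)
      + γ⁻¹ • (P * B * Bᵀ * P))).PosSemidef) :
    ∀ ω : ℝ,
      opNorm ((((Complex.I * ω) • (1 : Matrix (Fin n) (Fin n) ℂ)
        - A.map Complex.ofReal)⁻¹) * B.map Complex.ofReal) ≤ 1 := by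
  intro ω
  have hunit := hHurwitz.isUnit_smul_one_sub_map (μ := Complex.I * ω) (by simp)
  have hPc : (P.map Complex.ofReal).IsHermitian :=
    (isHermitian_iff_isSymm.mpr hPsym).map _ fun x ↦ (Complex.conj_ofReal x).symm
  have hRicc : (-(P.map Complex.ofReal * A.map Complex.ofReal
      + (A.map Complex.ofReal)ᴴ * P.map Complex.ofReal + γ • (1 : Matrix (Fin n) (Fin n) ℂ)
      + γ⁻¹ • (P.map Complex.ofReal * B.map Complex.ofReal * (B.map Complex.ofReal)ᴴ
        * P.map Complex.ofReal))).PosSemidef := by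
    convert hRic.map_ofReal using 1
    ext i j
    simp [Matrix.mul_apply, Matrix.one_apply, apply_ite Complex.ofReal]
  refine opNorm_le_one_of_dotProduct_star_self_le fun u ↦ ?_
  exact dotProduct_star_self_le_of_riccati hPc hγ hRicc (by simp)
    (mulVec_inv_smul_one_sub_mul_mulVec hunit _ u)

/-- a Riccati-type Lyapunov inequality implies the frequency-domain
bound `‖(iωI − A)⁻¹B‖₂ ≤ 1` for all real `ω`. -/
theorem hinf_bound_of_riccati {n m : ℕ} (A : Matrix (Fin n) (Fin n) ℝ)
    (P : Matrix (Fin n) (Fin n) ℝ) (B : Matrix (Fin n) (Fin m) ℝ) (γ : ℝ)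
    (hHurwitz : IsHurwitz A) (hP : P.PosDef) (hPsym : P.IsSymm) (hγ : 0 < γ)
    (hRic : (-(P * A + Aᵀ * P + γ • (1 : Matrix (Fin n) (Fin n) ℝ)
      + γ⁻¹ • (P * B * Bᵀ * P))).PosSemidef) :
    ∀ ω : ℝ,
      opNorm ((((Complex.I * ω) • (1 : Matrix (Fin n) (Fin n) ℂ)
        - A.map Complex.ofReal)⁻¹) * B.map Complex.ofReal) ≤ 1 :=
  hinf_bound_of_riccati_general A P B γ hHurwitz hPsym hγ hRic
end

section
/- Let F be an n×n Metzler Hurwitz matrix and let d, e ∈ ℝⁿ have strictly positive entries with F d < 0 entrywise and Fᵀ e < 0 entrywise. Then the diagonal matrix P = diag(e₁/d₁, …, eₙ/dₙ) is positive definite and satisfies P F + Fᵀ P ≺ 0 (negative definite). -/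
open Matrix

/-!
Write `S = P F + Fᵀ P`. It is symmetric and Metzler, and `S d = P (F d) + Fᵀ e < 0` because
`P d = e`. For any symmetric Metzler `S`, positive `d` and `x = d ∘ y`,
`2 (∑ᵢ yᵢ² dᵢ (S d)ᵢ - xᵀ S x) = ∑ᵢⱼ Sᵢⱼ dᵢ dⱼ (yᵢ - yⱼ)² ≥ 0`,
so `xᵀ S x < 0` whenever `x ≠ 0`.
-/

namespace Matrix

variable {ι : Type*} [Fintype ι]

def IsMetzler_s11 (A : Matrix ι ι ℝ) : Prop :=
  ∀ i j, i ≠ j → 0 ≤ A i j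

theorem IsMetzler_s11.diagonal_mul_add_transpose_mul_diagonal {A : Matrix ι ι ℝ} (hA : A.IsMetzler_s11)
    [DecidableEq ι] {p : ι → ℝ} (hp : ∀ i, 0 ≤ p i) :
    (diagonal p * A + Aᵀ * diagonal p).IsMetzler_s11 := by
  intro i j hij
  simp only [add_apply, diagonal_mul, mul_diagonal, transpose_apply]
  have := hA i j hij
  have := hA j i hij.symm
  have := hp i
  have := hp j
  positivity

theorem isSymm_diagonal_mul_add_transpose_mul_diagonal {R : Type*} [CommSemiring R]
    [DecidableEq ι] (A : Matrix ι ι R) (p : ι → R) : (diagonal p * A + Aᵀ * diagonal p).IsSymm := by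
  simp [IsSymm, transpose_add, transpose_mul, add_comm]

theorem IsSymm.sum_mul_sub_sq {R : Type*} [CommRing R] {S : Matrix ι ι R} (hS : S.IsSymm)
    (d y : ι → R) :
    ∑ i, ∑ j, S i j * d i * d j * (y i - y j) ^ 2 =
      2 * (∑ i, y i ^ 2 * d i * (S *ᵥ d) i - (d * y) ⬝ᵥ S *ᵥ (d * y)) := by
  have hdiag : ∑ i, y i ^ 2 * d i * (S *ᵥ d) i = ∑ i, ∑ j, S i j * d i * d j * y i ^ 2 := by
    simp only [mulVec, dotProduct, Finset.mul_sum]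
    exact Fintype.sum_congr _ _ fun i => Fintype.sum_congr _ _ fun j => by ring
  have hswap : ∑ i, ∑ j, S i j * d i * d j * y j ^ 2 = ∑ i, ∑ j, S i j * d i * d j * y i ^ 2 := by
    rw [Finset.sum_comm]
    exact Fintype.sum_congr _ _ fun i => Fintype.sum_congr _ _ fun j => by
      rw [hS.apply j i]; ring
  have hcross : (d * y) ⬝ᵥ S *ᵥ (d * y) = ∑ i, ∑ j, S i j * d i * d j * (y i * y j) := by
    simp only [mulVec, dotProduct, Finset.mul_sum, Pi.mul_apply]
    exact Fintype.sum_congr _ _ fun i => Fintype.sum_congr _ _ fun j => by ring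
  calc ∑ i, ∑ j, S i j * d i * d j * (y i - y j) ^ 2
      = ∑ i, ∑ j, (S i j * d i * d j * y i ^ 2 + S i j * d i * d j * y j ^ 2
          - 2 * (S i j * d i * d j * (y i * y j))) :=
        Fintype.sum_congr _ _ fun i => Fintype.sum_congr _ _ fun j => by ring
    _ = 2 * (∑ i, y i ^ 2 * d i * (S *ᵥ d) i - (d * y) ⬝ᵥ S *ᵥ (d * y)) := by
        simp only [Finset.sum_add_distrib, Finset.sum_sub_distrib, ← Finset.mul_sum]
        rw [hswap, hdiag, hcross]
        ring

theorem IsMetzler_s11.dotProduct_mulVec_le {S : Matrix ι ι ℝ} (hS : S.IsSymm) (hM : S.IsMetzler_s11)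
    {d : ι → ℝ} (hd : ∀ i, 0 ≤ d i) (y : ι → ℝ) :
    (d * y) ⬝ᵥ S *ᵥ (d * y) ≤ ∑ i, y i ^ 2 * d i * (S *ᵥ d) i := by
  have hsum : 0 ≤ ∑ i, ∑ j, S i j * d i * d j * (y i - y j) ^ 2 := by
    refine Finset.sum_nonneg fun i _ => Finset.sum_nonneg fun j _ => ?_
    rcases eq_or_ne i j with rfl | hij
    · simp
    · have := hM i j hij
      have := hd i
      have := hd j
      positivity
  linarith [hS.sum_mul_sub_sq d y]

theorem IsMetzler_s11.posDef_neg {S : Matrix ι ι ℝ} (hS : S.IsSymm) (hM : S.IsMetzler_s11)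
    {d : ι → ℝ} (hd : ∀ i, 0 < d i) (hSd : ∀ i, (S *ᵥ d) i < 0) : (-S).PosDef := by
  refine posDef_iff_dotProduct_mulVec.mpr ⟨isHermitian_iff_isSymm.mpr hS.neg, fun x hx => ?_⟩
  set y : ι → ℝ := x / d
  have hxy : d * y = x := by
    ext i
    exact mul_div_cancel₀ _ (hd i).ne'
  obtain ⟨i, hi⟩ := Function.ne_iff.mp hx
  have hbound : ∑ i, y i ^ 2 * d i * (S *ᵥ d) i < 0 := by
    refine Finset.sum_neg' (fun j _ => ?_) ⟨i, Finset.mem_univ _, ?_⟩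
    · exact mul_nonpos_of_nonneg_of_nonpos (by have := hd j; positivity) (hSd j).le
    · have : y i ≠ 0 := div_ne_zero hi (hd i).ne'
      exact mul_neg_of_pos_of_neg (by have := hd i; positivity) (hSd i)
  have := hM.dotProduct_mulVec_le hS (fun i => (hd i).le) y
  rw [hxy] at this
  simp only [star_trivial, neg_mulVec, dotProduct_neg]
  linarith

end Matrix

theorem diag_ratio_lyapunov_general {n : ℕ} (F : Matrix (Fin n) (Fin n) ℝ)
    (hMetzler : ∀ i j, i ≠ j → 0 ≤ F i j)
    (d e : Fin n → ℝ) (hd : ∀ i, 0 < d i) (he : ∀ i, 0 < e i)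
    (hFd : ∀ i, F.mulVec d i < 0) (hFe : ∀ i, Fᵀ.mulVec e i < 0) :
    (Matrix.diagonal (fun i => e i / d i)).PosDef ∧
      (-(Matrix.diagonal (fun i => e i / d i) * F
        + Fᵀ * Matrix.diagonal (fun i => e i / d i))).PosDef := by
  set p : Fin n → ℝ := fun i => e i / d i
  have hp : ∀ i, 0 < p i := fun i => div_pos (he i) (hd i)
  have hpd : diagonal p *ᵥ d = e := by
    ext i
    rw [mulVec_diagonal]
    exact div_mul_cancel₀ _ (hd i).ne'
  have hSd : ∀ i, ((diagonal p * F + Fᵀ * diagonal p) *ᵥ d) i < 0 := by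
    intro i
    rw [add_mulVec, ← mulVec_mulVec, ← mulVec_mulVec, hpd, Pi.add_apply, mulVec_diagonal]
    exact add_neg (mul_neg_of_pos_of_neg (hp i) (hFd i)) (hFe i)
  exact ⟨posDef_diagonal_iff.mpr hp,
    IsMetzler_s11.posDef_neg (isSymm_diagonal_mul_add_transpose_mul_diagonal F p)
      (IsMetzler_s11.diagonal_mul_add_transpose_mul_diagonal hMetzler fun i => (hp i).le) hd hSd⟩

/-- for a Metzler Hurwitz matrix with `F d < 0`, `Fᵀ e < 0`
(`d, e > 0`), the diagonal matrix `P = diag(eᵢ/dᵢ)` is positive definite and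
satisfies `P F + Fᵀ P ≺ 0`. -/
theorem diag_ratio_lyapunov {n : ℕ} (F : Matrix (Fin n) (Fin n) ℝ)
    (hMetzler : ∀ i j, i ≠ j → 0 ≤ F i j) (hHurwitz : IsHurwitz F)
    (d e : Fin n → ℝ) (hd : ∀ i, 0 < d i) (he : ∀ i, 0 < e i)
    (hFd : ∀ i, F.mulVec d i < 0) (hFe : ∀ i, Fᵀ.mulVec e i < 0) :
    (Matrix.diagonal (fun i => e i / d i)).PosDef ∧
      (-(Matrix.diagonal (fun i => e i / d i) * F
        + Fᵀ * Matrix.diagonal (fun i => e i / d i))).PosDef :=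
  diag_ratio_lyapunov_general F hMetzler d e hd he hFd hFe
end

section
/- Let Y be a symmetric block matrix Y = [[−Γ, 0],[0, −Ξ]] congruence-transformed as T ᵀ [[−Γ,0],[0,−Ξ]] T with T = [[I, 0],[D, I]], where Γ ∈ ℝ^{m×m}, Ξ ∈ ℝ^{p×p} are symmetric and D ∈ ℝ^{p×m}. Suppose δ² I − Γ ⪰ Υ and I − Ξ ⪰ Λ for positive semidefinite Υ, Λ, and the block matrix [[Υ, −Dᵀ],[−D, Λ]] ⪰ 0. Then Y ⪰ [[DᵀD − δ² I, 0],[0, −I]]. -/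
/-!
Congruence with `[[I, 0], [-D, I]]` turns the claim into `[[δ²I - Γ, -Dᵀ], [-D, I - Ξ]] ⪰ 0`,
and that matrix is the sum of `[[Υ, -Dᵀ], [-D, Λ]] ⪰ 0` and the block-diagonal
`diag(δ²I - Γ - Υ, I - Ξ - Λ) ⪰ 0`.
-/

open Matrix

namespace Matrix

variable {m n R : Type*} [Fintype m] [Fintype n]

theorem PosSemidef.fromBlocks_zero₁₂_zero₂₁
    [Ring R] [PartialOrder R] [StarRing R] [StarOrderedRing R] {A : Matrix m m R} {D : Matrix n n R}
    (hA : A.PosSemidef) (hD : D.PosSemidef) : (fromBlocks A 0 0 D).PosSemidef := by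
  refine .of_dotProduct_mulVec_nonneg (hA.1.fromBlocks (by simp) hD.1) fun x => ?_
  rw [← Sum.elim_comp_inl_inr x, fromBlocks_mulVec]
  simp only [zero_mulVec, add_zero, zero_add, Function.star_sumElim, sumElim_dotProduct_sumElim,
    Sum.elim_comp_inl, Sum.elim_comp_inr]
  exact add_nonneg (hA.dotProduct_mulVec_nonneg _) (hD.dotProduct_mulVec_nonneg _)

theorem transpose_fromBlocks_one_zero_mul_fromBlocks_mul
    [DecidableEq m] [DecidableEq n] [Semiring R] (K : Matrix n m R)
    (A : Matrix m m R) (B : Matrix m n R) (C : Matrix n m R) (D : Matrix n n R) :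
    (fromBlocks 1 0 K 1)ᵀ * fromBlocks A B C D * fromBlocks 1 0 K 1 =
      fromBlocks (A + B * K + Kᵀ * C + Kᵀ * D * K) (B + Kᵀ * D) (C + D * K) D := by
  simp only [fromBlocks_transpose, transpose_one, transpose_zero, fromBlocks_multiply,
    Matrix.one_mul, Matrix.zero_mul, Matrix.mul_one, Matrix.mul_zero, zero_add,
    Matrix.add_mul, Matrix.mul_assoc]
  congr 1
  abel

end Matrix

theorem cond_y_bound_general {m p : ℕ} (Γ : Matrix (Fin m) (Fin m) ℝ)
    (Ξ : Matrix (Fin p) (Fin p) ℝ) (D : Matrix (Fin p) (Fin m) ℝ)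
    (Υ : Matrix (Fin m) (Fin m) ℝ) (Λ : Matrix (Fin p) (Fin p) ℝ) (δ : ℝ)
    (hΓΥ : (δ ^ 2 • (1 : Matrix (Fin m) (Fin m) ℝ) - Γ - Υ).PosSemidef)
    (hΞΛ : ((1 : Matrix (Fin p) (Fin p) ℝ) - Ξ - Λ).PosSemidef)
    (hblock : (Matrix.fromBlocks Υ (-Dᵀ) (-D) Λ).PosSemidef) :
    ((Matrix.fromBlocks (1 : Matrix (Fin m) (Fin m) ℝ) 0 D
          (1 : Matrix (Fin p) (Fin p) ℝ))ᵀ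
        * Matrix.fromBlocks (-Γ) 0 0 (-Ξ)
        * Matrix.fromBlocks (1 : Matrix (Fin m) (Fin m) ℝ) 0 D
            (1 : Matrix (Fin p) (Fin p) ℝ)
      - Matrix.fromBlocks (Dᵀ * D - δ ^ 2 • (1 : Matrix (Fin m) (Fin m) ℝ)) 0 0
          (-(1 : Matrix (Fin p) (Fin p) ℝ))).PosSemidef := by
  set T := fromBlocks (1 : Matrix (Fin m) (Fin m) ℝ) 0 D (1 : Matrix (Fin p) (Fin p) ℝ)
  set S := fromBlocks (δ ^ 2 • (1 : Matrix (Fin m) (Fin m) ℝ) - Γ) (-Dᵀ) (-D) (1 - Ξ)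
  have hcongr : Tᵀ * fromBlocks (-Γ) 0 0 (-Ξ) * T
      - fromBlocks (Dᵀ * D - δ ^ 2 • 1) 0 0 (-1) = Tᵀ * S * T := by
    rw [sub_eq_iff_eq_add, transpose_fromBlocks_one_zero_mul_fromBlocks_mul,
      transpose_fromBlocks_one_zero_mul_fromBlocks_mul, fromBlocks_add]
    congr 1 <;>
      simp only [sub_eq_add_neg, Matrix.mul_add, Matrix.add_mul, Matrix.mul_neg, Matrix.neg_mul,
        Matrix.mul_one, Matrix.one_mul, Matrix.zero_mul, Matrix.mul_zero, Matrix.mul_assoc] <;>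
      abel
  have hsplit :
      S = fromBlocks Υ (-Dᵀ) (-D) Λ + fromBlocks (δ ^ 2 • 1 - Γ - Υ) 0 0 (1 - Ξ - Λ) := by
    simp only [S, fromBlocks_add]
    congr 1 <;> abel
  rw [hcongr, hsplit]
  simpa using (hblock.add (hΓΥ.fromBlocks_zero₁₂_zero₂₁ hΞΛ)).conjTranspose_mul_mul_same T

/-- the key step (cond_y) in the proof of Theorem 3.1. With
`T = [[I,0],[D,I]]` and `Y = Tᵀ [[−Γ,0],[0,−Ξ]] T`, the hypotheses
`δ²I − Γ ⪰ Υ`, `I − Ξ ⪰ Λ`, `Υ, Λ ⪰ 0`, and `[[Υ, −Dᵀ],[−D, Λ]] ⪰ 0`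
imply `Y ⪰ [[DᵀD − δ²I, 0],[0, −I]]`. -/
theorem cond_y_bound {m p : ℕ} (Γ : Matrix (Fin m) (Fin m) ℝ)
    (Ξ : Matrix (Fin p) (Fin p) ℝ) (D : Matrix (Fin p) (Fin m) ℝ)
    (Υ : Matrix (Fin m) (Fin m) ℝ) (Λ : Matrix (Fin p) (Fin p) ℝ) (δ : ℝ)
    (hΓ : Γ.IsSymm) (hΞ : Ξ.IsSymm)
    (hΥ : Υ.PosSemidef) (hΛ : Λ.PosSemidef)
    (hΓΥ : (δ ^ 2 • (1 : Matrix (Fin m) (Fin m) ℝ) - Γ - Υ).PosSemidef)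
    (hΞΛ : ((1 : Matrix (Fin p) (Fin p) ℝ) - Ξ - Λ).PosSemidef)
    (hblock : (Matrix.fromBlocks Υ (-Dᵀ) (-D) Λ).PosSemidef) :
    ((Matrix.fromBlocks (1 : Matrix (Fin m) (Fin m) ℝ) 0 D
          (1 : Matrix (Fin p) (Fin p) ℝ))ᵀ
        * Matrix.fromBlocks (-Γ) 0 0 (-Ξ)
        * Matrix.fromBlocks (1 : Matrix (Fin m) (Fin m) ℝ) 0 D
            (1 : Matrix (Fin p) (Fin p) ℝ)
      - Matrix.fromBlocks (Dᵀ * D - δ ^ 2 • (1 : Matrix (Fin m) (Fin m) ℝ)) 0 0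
          (-(1 : Matrix (Fin p) (Fin p) ℝ))).PosSemidef :=
  cond_y_bound_general Γ Ξ D Υ Λ δ hΓΥ hΞΛ hblock
end

section
/- Let F be an n×n Metzler Hurwitz matrix and d ∈ ℝⁿ a strictly positive vector with F d < 0 entrywise. Then V(ξ) = max_{1≤i≤n} ξᵢ/dᵢ is strictly decreasing along solutions of ξ̇ = F ξ starting in the open positive orthant: if ξ(t) > 0 entrywise and ξ(t) ≠ 0, then the upper-right Dini derivative of V(ξ(t)) along the flow is negative. -/
open Matrix

/-!
Let `V = maxᵢ ξᵢ/dᵢ`. The upper right Dini derivative of a finite maximum of differentiable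
functions is bounded by the largest derivative among the indices where the maximum is attained.
At such an index `i` we have `ξᵢ = V dᵢ` and `ξ ≤ V d`, so, `F` being Metzler,
`(Fξ)ᵢ ≤ V (Fd)ᵢ < 0`.
-/

open Filter Topology

theorem Matrix.mulVec_apply_le_of_le_of_eq {ι R : Type*} [Fintype ι] [Semiring R]
    [PartialOrder R] [IsOrderedRing R] (F : Matrix ι ι R) {i : ι} (hF : ∀ j, j ≠ i → 0 ≤ F i j)
    {x y : ι → R} (hxy : x ≤ y) (hi : x i = y i) :
    (F *ᵥ x) i ≤ (F *ᵥ y) i := by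
  refine Finset.sum_le_sum fun j _ => ?_
  rcases eq_or_ne j i with rfl | hj
  · rw [hi]
  · exact mul_le_mul_of_nonneg_left (hxy j) (hF j hj)

section DiniMax

variable {ι : Type*} [Finite ι] [Nonempty ι] {f : ι → ℝ → ℝ} {f' : ι → ℝ} {t : ℝ}

theorem eventually_iSup_slope_le {c : ℝ} (hf : ∀ i, HasDerivAt (f i) (f' i) t)
    (hc : ∀ i, f i t = ⨆ j, f j t → f' i < c) :
    ∀ᶠ h in 𝓝[>] 0, ((⨆ i, f i (t + h)) - ⨆ i, f i t) / h ≤ c := by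
  set M := ⨆ j, f j t
  have hbound : ∀ i, ∀ᶠ h in 𝓝[>] (0 : ℝ), f i (t + h) ≤ M + c * h := by
    intro i
    rcases (le_ciSup (Finite.bddAbove_range fun j => f j t) i).eq_or_lt with hi | hi
    · filter_upwards [(hf i).tendsto_slope_zero_right.eventually_lt_const (hc i hi),
        self_mem_nhdsWithin] with h hslope (hh : 0 < h)
      rw [smul_eq_mul, inv_mul_lt_iff₀ hh, hi] at hslope
      linarith
    · have hleft : Tendsto (fun h => f i (t + h)) (𝓝[>] 0) (𝓝 (f i t)) :=
        ((hf i).continuousAt.tendsto.comp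
          ((continuous_const_add t).tendsto' 0 t (add_zero t))).mono_left nhdsWithin_le_nhds
      have hright : Tendsto (fun h => M + c * h) (𝓝[>] 0) (𝓝 M) :=
        ((continuous_const.add (continuous_const.mul continuous_id)).tendsto' 0 M
          (by simp [M])).mono_left nhdsWithin_le_nhds
      exact (hleft.eventually_lt hright hi).mono fun _ => le_of_lt
  filter_upwards [eventually_all.2 hbound, self_mem_nhdsWithin] with h hh (hpos : 0 < h)
  rw [div_le_iff₀ hpos]
  linarith [ciSup_le hh]

theorem isCoboundedUnder_le_iSup_slope (hf : ∀ i, HasDerivAt (f i) (f' i) t) :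
    IsCoboundedUnder (· ≤ ·) (𝓝[>] 0)
      fun h => ((⨆ i, f i (t + h)) - ⨆ i, f i t) / h := by
  obtain ⟨i, hi⟩ := exists_eq_ciSup_of_finite (f := fun j => f j t)
  refine isCoboundedUnder_le_of_eventually_le _ (x := f' i - 1) ?_
  filter_upwards [(hf i).tendsto_slope_zero_right.eventually_const_lt (sub_one_lt _),
    self_mem_nhdsWithin] with h hslope (hh : 0 < h)
  rw [smul_eq_mul, inv_mul_eq_div, hi] at hslope
  refine hslope.le.trans (div_le_div_of_nonneg_right ?_ hh.le)
  exact sub_le_sub_right (le_ciSup (Finite.bddAbove_range fun j => f j (t + h)) i) _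

theorem limsup_iSup_slope_neg (hf : ∀ i, HasDerivAt (f i) (f' i) t)
    (hneg : ∀ i, f i t = ⨆ j, f j t → f' i < 0) :
    limsup (fun h => ((⨆ i, f i (t + h)) - ⨆ i, f i t) / h) (𝓝[>] 0) < 0 := by
  obtain ⟨c, hc, hc_neg⟩ : ∃ c, (∀ i, f i t = ⨆ j, f j t → f' i < c) ∧ c < 0 := by
    -- each `f' i < c` holds for all `c` near `0`, so all of them hold for some `c < 0`
    refine ((eventually_all.2 fun i => ?_).and self_mem_nhdsWithin).exists (f := 𝓝[<] (0 : ℝ))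
    by_cases hi : f i t = ⨆ j, f j t
    · exact mem_nhdsWithin_of_mem_nhds ((eventually_gt_nhds (hneg i hi)).mono fun _ h _ => h)
    · exact Eventually.of_forall fun _ h => absurd h hi
  exact (limsup_le_of_le (isCoboundedUnder_le_iSup_slope hf)
    (eventually_iSup_slope_le hf hc)).trans_lt hc_neg

end DiniMax

theorem max_separable_lyapunov_decreasing_general {n : ℕ} (hn : 0 < n)
    (F : Matrix (Fin n) (Fin n) ℝ)
    (hMetzler : ∀ i j, i ≠ j → 0 ≤ F i j)
    (d : Fin n → ℝ) (hd : ∀ i, 0 < d i) (hFd : ∀ i, F.mulVec d i < 0)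
    (ξ : ℝ → (Fin n → ℝ)) (hξ : ∀ s : ℝ, HasDerivAt ξ (F.mulVec (ξ s)) s)
    (t : ℝ) (hpos : ∀ i, 0 < ξ t i) :
    Filter.limsup
        (fun h : ℝ =>
          ((⨆ i, ξ (t + h) i / d i) - (⨆ i, ξ t i / d i)) / h)
        (nhdsWithin 0 (Set.Ioi 0)) < 0 := by
  have : Nonempty (Fin n) := Fin.pos_iff_nonempty.mp hn
  set V := ⨆ i, ξ t i / d i
  have hV_ge : ∀ i, ξ t i / d i ≤ V := le_ciSup (Finite.bddAbove_range _)
  have hV_pos : 0 < V := (div_pos (hpos ⟨0, hn⟩) (hd _)).trans_le (hV_ge _)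
  have hξ_le : ξ t ≤ V • d := fun i => (div_le_iff₀ (hd i)).mp (hV_ge i)
  refine limsup_iSup_slope_neg (f := fun i s => ξ s i / d i)
    (fun i => (hasDerivAt_pi.mp (hξ t) i).div_const (d i))
    fun i hi => div_neg_of_neg_of_pos ?_ (hd i)
  calc (F *ᵥ ξ t) i ≤ (F *ᵥ (V • d)) i :=
        F.mulVec_apply_le_of_le_of_eq (fun j hj => hMetzler i j hj.symm) hξ_le
          ((div_eq_iff (hd i).ne').mp hi)
    _ = V * (F *ᵥ d) i := by rw [mulVec_smul, Pi.smul_apply, smul_eq_mul]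
    _ < 0 := mul_neg_of_pos_of_neg hV_pos (hFd i)

/-- the max-separable function `V(ξ) = maxᵢ ξᵢ/dᵢ` strictly
decreases along trajectories of `ξ̇ = F ξ` in the open positive orthant:
its upper-right Dini derivative along the flow is negative. -/
theorem max_separable_lyapunov_decreasing {n : ℕ} (hn : 0 < n)
    (F : Matrix (Fin n) (Fin n) ℝ)
    (hMetzler : ∀ i j, i ≠ j → 0 ≤ F i j) (hHurwitz : IsHurwitz F)
    (d : Fin n → ℝ) (hd : ∀ i, 0 < d i) (hFd : ∀ i, F.mulVec d i < 0)
    (ξ : ℝ → (Fin n → ℝ)) (hξ : ∀ s : ℝ, HasDerivAt ξ (F.mulVec (ξ s)) s)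
    (t : ℝ) (hpos : ∀ i, 0 < ξ t i) (hne : ξ t ≠ 0) :
    Filter.limsup
        (fun h : ℝ =>
          ((⨆ i, ξ (t + h) i / d i) - (⨆ i, ξ t i / d i)) / h)
        (nhdsWithin 0 (Set.Ioi 0)) < 0 :=
  max_separable_lyapunov_decreasing_general hn F hMetzler d hd hFd ξ hξ t hpos
end
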